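/- Let M be of class C² on [0,∞) with M(τ) ≤ 0 for all τ ≥ 0, let (λ_k)_{k≥1} be a sequence of positive real numbers, and for each k let x_k be the unique solution of the memory ODE with parameter λ_k. Then for every t₀ > 0 and every a = (a_k) ∈ ℓ², if a_k·x_k(t₀) = 0 for all k ≥ 1, then a = 0. -/

import Mathlib

/-!
With a nonpositive kernel the memory term only pushes a nonnegative solution upwards, so
`x' + λ x ≥ 0` as long as `x ≥ 0` on `[0, t]`; hence `e^{λ t} x(t)` is nondecreasing there
and `x(t) ≥ e^{-λ t} > 0`. Applied at the first point where `x` would become nonpositive this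
shows that every `x_k` stays positive, so `a_k x_k(t₀) = 0` forces `a_k = 0`.
-/

noncomputable section

/-- `MemSol M lam x x'` says `x` is a solution on `[0,∞)` of the memory ODE
`x'(t) + lam·x(t) + ∫₀ᵗ M(t−s)·x(s) ds = 0`, `x(0)=1`, with continuous
derivative `x'` on `[0,∞)` (i.e. `x` is continuously differentiable there). -/
def MemSol (M : ℝ → ℝ) (lam : ℝ) (x x' : ℝ → ℝ) : Prop :=
  x 0 = 1 ∧ ContinuousOn x' (Set.Ici 0) ∧
    (∀ t ∈ Set.Ici (0 : ℝ), HasDerivWithinAt x (x' t) (Set.Ici 0) t) ∧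
    (∀ t ∈ Set.Ici (0 : ℝ), x' t + lam * x t + ∫ s in (0:ℝ)..t, M (t - s) * x s = 0)

open Set

lemma exists_le_zero_forall_pos_Ico {f : ℝ → ℝ} {a b : ℝ} (hab : a ≤ b)
    (hf : ContinuousOn f (Icc a b)) (hfb : f b ≤ 0) :
    ∃ c ∈ Icc a b, f c ≤ 0 ∧ ∀ s ∈ Ico a c, 0 < f s := by
  set S := Icc a b ∩ f ⁻¹' Iic 0
  have hS : IsCompact S :=
    isCompact_Icc.of_isClosed_subset (hf.preimage_isClosed_of_isClosed isClosed_Icc isClosed_Iic)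
      inter_subset_left
  obtain ⟨c, ⟨hc, hfc⟩, hleast⟩ := hS.exists_isLeast ⟨b, ⟨hab, le_rfl⟩, hfb⟩
  refine ⟨c, hc, hfc, fun s hs => ?_⟩
  by_contra! hfs
  exact (hleast ⟨⟨hs.1, hs.2.le.trans hc.2⟩, hfs⟩).not_gt hs.2

lemma memory_integral_nonpos {M x : ℝ → ℝ} (hM0 : ∀ τ ≥ (0:ℝ), M τ ≤ 0) {s : ℝ} (hs : 0 ≤ s)
    (hx : ∀ u ∈ Icc 0 s, 0 ≤ x u) :
    ∫ u in (0:ℝ)..s, M (s - u) * x u ≤ 0 := by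
  have : 0 ≤ ∫ u in (0:ℝ)..s, -(M (s - u) * x u) :=
    intervalIntegral.integral_nonneg hs fun u hu =>
      neg_nonneg.mpr (mul_nonpos_of_nonpos_of_nonneg (hM0 _ (by linarith [hu.2])) (hx u hu))
  rwa [intervalIntegral.integral_neg, neg_nonneg] at this

lemma MemSol.continuousOn {M : ℝ → ℝ} {lam : ℝ} {x x' : ℝ → ℝ} (h : MemSol M lam x x') :
    ContinuousOn x (Ici 0) :=
  fun s hs => (h.2.2.1 s hs).continuousWithinAt

lemma MemSol.one_le_exp_mul_of_nonneg {M : ℝ → ℝ} (hM0 : ∀ τ ≥ (0:ℝ), M τ ≤ 0) {lam : ℝ}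
    {x x' : ℝ → ℝ} (h : MemSol M lam x x') {T : ℝ} (hT : 0 ≤ T)
    (hx : ∀ s ∈ Ico 0 T, 0 ≤ x s) :
    1 ≤ Real.exp (lam * T) * x T := by
  have hcont := h.continuousOn
  obtain ⟨h0, -, hd, heq⟩ := h
  have hmono : MonotoneOn (fun s => Real.exp (lam * s) * x s) (Icc 0 T) := by
    refine monotoneOn_of_hasDerivWithinAt_nonneg (convex_Icc 0 T)
      (f' := fun s => Real.exp (lam * s) * lam * x s + Real.exp (lam * s) * x' s)
      ((by fun_prop : Continuous fun s => Real.exp (lam * s)).continuousOn.mul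
        (hcont.mono Icc_subset_Ici_self)) (fun s hs => ?_) (fun s hs => ?_)
    all_goals rw [interior_Icc] at hs
    · have hexp : HasDerivAt (fun u => Real.exp (lam * u)) (Real.exp (lam * s) * lam) s := by
        simpa using ((hasDerivAt_id s).const_mul lam).exp
      exact hexp.hasDerivWithinAt.mul
        ((hd s hs.1.le).mono (interior_subset.trans Icc_subset_Ici_self))
    · have hmem := memory_integral_nonpos hM0 hs.1.le fun u hu => hx u ⟨hu.1, hu.2.trans_lt hs.2⟩
      have hsum : Real.exp (lam * s) * lam * x s + Real.exp (lam * s) * x' s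
          = Real.exp (lam * s) * -(∫ u in (0:ℝ)..s, M (s - u) * x u) := by
        linear_combination Real.exp (lam * s) * heq s hs.1.le
      rw [hsum]
      exact mul_nonneg (Real.exp_pos _).le (neg_nonneg.mpr hmem)
  simpa [h0] using hmono ⟨le_rfl, hT⟩ ⟨hT, le_rfl⟩ hT

lemma MemSol.pos {M : ℝ → ℝ} (hM0 : ∀ τ ≥ (0:ℝ), M τ ≤ 0) {lam : ℝ} {x x' : ℝ → ℝ}
    (h : MemSol M lam x x') {t : ℝ} (ht : 0 ≤ t) :
    0 < x t := by
  by_contra! hxt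
  obtain ⟨c, hc, hxc, hpos⟩ :=
    exists_le_zero_forall_pos_Ico ht (h.continuousOn.mono Icc_subset_Ici_self) hxt
  have := h.one_le_exp_mul_of_nonneg hM0 hc.1 fun s hs => (hpos s hs).le
  nlinarith [Real.exp_pos (lam * c)]

theorem stmt8_general (M : ℝ → ℝ)
    (hM0 : ∀ τ ≥ (0:ℝ), M τ ≤ 0)
    (lam : ℕ → ℝ)
    (x x' : ℕ → ℝ → ℝ) (hx : ∀ k, MemSol M (lam k) (x k) (x' k)) :
    ∀ t₀ > (0:ℝ), ∀ a : ℕ → ℝ, Summable (fun k => (a k) ^ 2) →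
      (∀ k, a k * x k t₀ = 0) → a = 0 := by
  intro t₀ ht₀ a _ ha
  funext k
  exact (mul_eq_zero.mp (ha k)).resolve_right ((hx k).pos hM0 ht₀.le).ne'

/-- For nonpositive `C²` kernels, backward uniqueness holds at every single time instant. -/
theorem stmt8 (M : ℝ → ℝ) (hM : ContDiffOn ℝ 2 M (Set.Ici 0))
    (hM0 : ∀ τ ≥ (0:ℝ), M τ ≤ 0)
    (lam : ℕ → ℝ) (hlam : ∀ k, 0 < lam k)
    (x x' : ℕ → ℝ → ℝ) (hx : ∀ k, MemSol M (lam k) (x k) (x' k)) :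
    ∀ t₀ > (0:ℝ), ∀ a : ℕ → ℝ, Summable (fun k => (a k) ^ 2) →
      (∀ k, a k * x k t₀ = 0) → a = 0 :=
  stmt8_general M hM0 lam x x' hx
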